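/- For the question observable q_a of an element a of a σ-MV-effect algebra, with spectral resolution B_{q_a}(t) = 0 for t ≤ 0, a' for 0 < t ≤ 1, and 1 for t > 1, and with −q_a having spectral resolution B_{−q_a}(t) = 0 for t ≤ −1, a for −1 < t ≤ 0, and 1 for t > 0, one has q_a + (−q_a) = o if and only if a ∧ a' = 0 (i.e., a is sharp). -/
import Mathlib


open Set

/-- A σ-complete MV-effect algebra: an MV-algebra (with `⊕`, `¬`, `⊥ = 0`,
`⊤ = 1`) whose natural order is the given lattice order and in which every
countable subset has a supremum and an infimum (given by `sSup`/`sInf`). -/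
class SigmaMVEffectAlgebra (E : Type*) extends
    Lattice E, BoundedOrder E, SupSet E, InfSet E where
  oplus : E → E → E
  neg : E → E
  oplus_assoc : ∀ a b c : E, oplus (oplus a b) c = oplus a (oplus b c)
  oplus_comm : ∀ a b : E, oplus a b = oplus b a
  oplus_bot : ∀ a : E, oplus a ⊥ = a
  neg_neg : ∀ a : E, neg (neg a) = a
  oplus_top : ∀ a : E, oplus a ⊤ = ⊤
  neg_bot : neg (⊥ : E) = ⊤
  luk : ∀ a b : E, oplus (neg (oplus (neg a) b)) b = oplus (neg (oplus (neg b) a)) a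
  le_iff_oplus : ∀ a b : E, a ≤ b ↔ oplus (neg a) b = ⊤
  isLUB_sSup : ∀ s : Set E, s.Countable → IsLUB s (sSup s)
  isGLB_sInf : ∀ s : Set E, s.Countable → IsGLB s (sInf s)

namespace SigmaMVEffectAlgebra

variable {E : Type*} [SigmaMVEffectAlgebra E]

open Classical in
/-- The partial effect-algebra addition of the MV-effect algebra:
`a + b` is defined iff `a ≤ b'`, and then `a + b = a ⊕ b`. -/
noncomputable def padd (a b : E) : Option E :=
  if a ≤ neg b then some (oplus a b) else none

/-- An observable on `E`: a `σ`-homomorphism from the Borel σ-algebra of `ℝ`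
into `E`. -/
structure Observable (E : Type*) [SigmaMVEffectAlgebra E] where
  toFun : Set ℝ → E
  total : toFun Set.univ = ⊤
  additive : ∀ A B : Set ℝ, MeasurableSet A → MeasurableSet B → Disjoint A B →
    padd (toFun A) (toFun B) = some (toFun (A ∪ B))
  cont : ∀ A : ℕ → Set ℝ, (∀ n, MeasurableSet (A n)) → Monotone A →
    IsLUB (Set.range fun n => toFun (A n)) (toFun (⋃ n, A n))

/-- An observable is bounded if `x([α,β]) = 1` for some interval. -/
def Observable.Bounded (x : Observable E) : Prop :=
  ∃ α β : ℝ, x.toFun (Set.Icc α β) = ⊤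

/-- The spectral resolution `B_x(t) = x((-∞,t))` of an observable. -/
def spec (x : Observable E) (t : ℝ) : E := x.toFun (Set.Iio t)

end SigmaMVEffectAlgebra

namespace SigmaMVEffectAlgebra

variable {E : Type*} [SigmaMVEffectAlgebra E]

lemma my_neg_le_neg {a b : E} (h : a ≤ b) : neg b ≤ neg a := by
  rw [le_iff_oplus, neg_neg, oplus_comm]
  rw [le_iff_oplus] at h
  exact h

lemma my_sup_neg_eq_top {a : E} (h : a ⊓ neg a = ⊥) : a ⊔ neg a = ⊤ := by
  have h1 : neg (a ⊔ neg a) ≤ a ⊓ neg a := by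
    refine le_inf ?_ (my_neg_le_neg le_sup_left)
    have := my_neg_le_neg (le_sup_right (a := a) (b := neg a))
    rwa [neg_neg] at this
  have h2 : neg (a ⊓ neg a) ≤ a ⊔ neg a := by
    have := my_neg_le_neg h1
    rwa [neg_neg] at this
  rw [h, neg_bot] at h2
  exact le_antisymm le_top h2

end SigmaMVEffectAlgebra

open SigmaMVEffectAlgebra in
/-- For the question observable `q_a` and its negative `−q_a`, one has
`q_a + (−q_a) = o` if and only if `a` is sharp, i.e. `a ∧ a' = 0`. -/
theorem question_add_neg_question_eq_zero_iff_sharp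
    {E : Type*} [SigmaMVEffectAlgebra E] (a : E) (qa nqa : Observable E)
    (hqa : ∀ t : ℝ, spec qa t =
      if t ≤ 0 then (⊥ : E) else if t ≤ 1 then neg a else ⊤)
    (hnqa : ∀ t : ℝ, spec nqa t =
      if t ≤ -1 then (⊥ : E) else if t ≤ 0 then a else ⊤) :
    (∀ t : ℝ, (⨆ r : ℚ, spec qa r ⊓ spec nqa (t - r)) =
        if t ≤ 0 then (⊥ : E) else ⊤) ↔
      a ⊓ neg a = ⊥ := by
  classical
  constructor
  · intro h
    have h0 := h 0
    rw [if_pos le_rfl] at h0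
    have hlub : IsLUB (Set.range fun r : ℚ => spec qa (r : ℝ) ⊓ spec nqa ((0 : ℝ) - r))
        (⨆ r : ℚ, spec qa (r : ℝ) ⊓ spec nqa ((0 : ℝ) - r)) :=
      isLUB_sSup _ (Set.countable_range _)
    have hle := hlub.1 (Set.mem_range_self ((1 : ℚ)/2))
    rw [h0] at hle
    rw [hqa, hnqa] at hle
    rw [if_neg (by norm_num), if_pos (by norm_num), if_neg (by norm_num),
      if_pos (by norm_num)] at hle
    exact le_antisymm (le_trans (le_inf inf_le_right inf_le_left) hle) bot_le
  · intro h t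
    have hlub : IsLUB (Set.range fun r : ℚ => spec qa (r : ℝ) ⊓ spec nqa (t - r))
        (⨆ r : ℚ, spec qa (r : ℝ) ⊓ spec nqa (t - r)) :=
      isLUB_sSup _ (Set.countable_range _)
    by_cases ht : t ≤ 0
    · rw [if_pos ht]
      refine le_antisymm (hlub.2 ?_) bot_le
      rintro x ⟨r, rfl⟩
      show spec qa (r : ℝ) ⊓ spec nqa (t - r) ≤ ⊥
      rw [hqa, hnqa]
      by_cases hr0 : (r : ℝ) ≤ 0
      · rw [if_pos hr0]; exact inf_le_left
      · rw [if_neg hr0]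
        push_neg at hr0
        by_cases hr1 : t - (r : ℝ) ≤ -1
        · rw [if_pos hr1]; exact inf_le_right
        · push_neg at hr1
          rw [if_neg (not_le.mpr hr1), if_pos (by linarith : (r : ℝ) ≤ 1),
            if_pos (by linarith : t - (r : ℝ) ≤ 0)]
          rw [← h]
          exact le_inf inf_le_right inf_le_left
    · rw [if_neg ht]
      push_neg at ht
      by_cases ht1 : t ≤ 1
      · have h2 : a ⊔ neg a ≤ ⨆ r : ℚ, spec qa (r : ℝ) ⊓ spec nqa (t - r) := by
          refine sup_le ?_ ?_
          · obtain ⟨r, hr1, hr2⟩ := exists_rat_btwn (show (1 : ℝ) < t + 1 by linarith)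
            have hmem := hlub.1 (Set.mem_range_self r)
            have heq : spec qa (r : ℝ) ⊓ spec nqa (t - r) = a := by
              rw [hqa, hnqa, if_neg (by linarith : ¬ (r : ℝ) ≤ 0),
                if_neg (not_le.mpr hr1), if_neg (by linarith : ¬ t - (r : ℝ) ≤ -1),
                if_pos (by linarith : t - (r : ℝ) ≤ 0)]
              exact top_inf_eq a
            rwa [heq] at hmem
          · obtain ⟨r, hr1, hr2⟩ := exists_rat_btwn ht
            have hmem := hlub.1 (Set.mem_range_self r)
            have heq : spec qa (r : ℝ) ⊓ spec nqa (t - r) = neg a := by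
              rw [hqa, hnqa, if_neg (not_le.mpr hr1), if_pos (by linarith : (r : ℝ) ≤ 1),
                if_neg (by linarith : ¬ t - (r : ℝ) ≤ -1),
                if_neg (by linarith : ¬ t - (r : ℝ) ≤ 0)]
              exact inf_top_eq (neg a)
            rwa [heq] at hmem
        rw [my_sup_neg_eq_top h] at h2
        exact le_antisymm le_top h2
      · push_neg at ht1
        obtain ⟨r, hr1, hr2⟩ := exists_rat_btwn ht1
        have hmem := hlub.1 (Set.mem_range_self r)
        have heq : spec qa (r : ℝ) ⊓ spec nqa (t - r) = ⊤ := by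
          rw [hqa, hnqa, if_neg (by linarith : ¬ (r : ℝ) ≤ 0),
            if_neg (not_le.mpr hr1), if_neg (by linarith : ¬ t - (r : ℝ) ≤ -1),
            if_neg (by linarith : ¬ t - (r : ℝ) ≤ 0)]
          exact top_inf_eq ⊤
        rw [heq] at hmem
        exact le_antisymm le_top hmem
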